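/- arXiv:1307.2114 — 2 statements merged into one kernel-verified Lean document; each statement's English description precedes it below -/
import Mathlib

section
/- For any natural number b ≥ 2, the sum over l from 1 to b-1 of 1/|e^{2πil/b} - 1|² equals (b²-1)/12. -/
/-!
For a nontrivial `b`-th root of unity `z`, `∑_{k<b} k z^k = b / (z - 1)`, so `1 / |z - 1|²` is
`|∑_{k<b} k z^k|² / b²`. Summed over all `b`-th roots of unity, Parseval's identity for the discrete
Fourier transform turns `∑ |∑_{k<b} k z^k|²` into `b ∑_{k<b} k²`; removing the term of `z = 1`,
which is `(∑_{k<b} k)²`, leaves `b ∑ k² - (∑ k)² = b² (b² - 1) / 12`, that is `b²` times the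
variance of the uniform distribution on `{0, …, b - 1}`.
-/

open Finset Complex ComplexConjugate

theorem sub_one_mul_sum_range_natCast_mul_pow_add_mul_geom_sum {R : Type*} [CommRing R] (z : R)
    (n : ℕ) :
    (z - 1) * ∑ k ∈ range n, (k : R) * z ^ k + z * ∑ k ∈ range n, z ^ k = n * z ^ n := by
  induction n with
  | zero => simp
  | succ n ih =>
    rw [sum_range_succ, sum_range_succ]
    push_cast
    linear_combination ih

section Field

variable {K : Type*} [Field K] {z : K} {n : ℕ}

theorem geom_sum_eq_zero_of_pow_eq_one (hzn : z ^ n = 1) (hz : z ≠ 1) :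
    ∑ k ∈ range n, z ^ k = 0 := by
  rw [geom_sum_eq hz, hzn, sub_self, zero_div]

theorem sum_range_natCast_mul_pow_of_pow_eq_one (hzn : z ^ n = 1) (hz : z ≠ 1) :
    ∑ k ∈ range n, (k : K) * z ^ k = n / (z - 1) := by
  have h := sub_one_mul_sum_range_natCast_mul_pow_add_mul_geom_sum z n
  rw [geom_sum_eq_zero_of_pow_eq_one hzn hz, hzn] at h
  rw [eq_div_iff (sub_ne_zero.mpr hz)]
  linear_combination h

theorem IsPrimitiveRoot.geom_sum_pow_div_pow_eq_ite {ζ : K} (hζ : IsPrimitiveRoot ζ n) {j k : ℕ}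
    (hj : j < n) (hk : k < n) :
    ∑ l ∈ range n, (ζ ^ j / ζ ^ k) ^ l = if j = k then (n : K) else 0 := by
  have hζk : ζ ^ k ≠ 0 := pow_ne_zero k (hζ.ne_zero (by omega))
  split_ifs with hjk
  · simp [hjk, div_self hζk]
  · refine geom_sum_eq_zero_of_pow_eq_one ?_ ?_
    · rw [div_pow, ← pow_mul, ← pow_mul, pow_mul', pow_mul', hζ.pow_eq_one, one_pow, one_pow,
        div_one]
    · rw [Ne, div_eq_one_iff_eq hζk]
      exact fun h ↦ hjk (hζ.pow_inj hj hk h)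

end Field

theorem IsPrimitiveRoot.sum_norm_sq_sum_mul_pow {ζ : ℂ} {n : ℕ} (hζ : IsPrimitiveRoot ζ n)
    (a : ℕ → ℂ) :
    ∑ l ∈ range n, ‖∑ k ∈ range n, a k * (ζ ^ l) ^ k‖ ^ 2 = n * ∑ k ∈ range n, ‖a k‖ ^ 2 := by
  rcases eq_or_ne n 0 with rfl | hn
  · simp
  have hconj : conj ζ = ζ⁻¹ := (inv_eq_conj (hζ.norm'_eq_one hn)).symm
  apply ofReal_injective
  push_cast
  simp_rw [← mul_conj', map_sum, map_mul, map_pow, hconj, sum_mul_sum]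
  calc ∑ l ∈ range n, ∑ j ∈ range n, ∑ k ∈ range n,
          a j * (ζ ^ l) ^ j * (conj (a k) * (ζ⁻¹ ^ l) ^ k)
      = ∑ j ∈ range n, ∑ k ∈ range n,
          a j * conj (a k) * ∑ l ∈ range n, (ζ ^ j / ζ ^ k) ^ l := by
        rw [sum_comm]
        refine sum_congr rfl fun j _ ↦ ?_
        rw [sum_comm]
        refine sum_congr rfl fun k _ ↦ ?_
        rw [mul_sum]
        refine sum_congr rfl fun l _ ↦ ?_
        rw [div_pow, ← pow_mul, ← pow_mul, ← pow_mul, inv_pow, ← pow_mul, mul_comm j l,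
          mul_comm k l]
        ring
    _ = ∑ j ∈ range n, a j * conj (a j) * n := by
        refine sum_congr rfl fun j hj ↦ ?_
        rw [sum_congr rfl fun k hk ↦ by
          rw [hζ.geom_sum_pow_div_pow_eq_ite (mem_range.mp hj) (mem_range.mp hk)]]
        simp only [mul_ite, mul_zero]
        rw [sum_ite_eq, if_pos hj]
    _ = n * ∑ k ∈ range n, a k * conj (a k) := by
        rw [mul_sum]
        exact sum_congr rfl fun _ _ ↦ mul_comm _ _

theorem inv_norm_sub_one_sq_eq_of_pow_eq_one {z : ℂ} {n : ℕ} (hn : n ≠ 0) (hzn : z ^ n = 1)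
    (hz : z ≠ 1) : 1 / ‖z - 1‖ ^ 2 = ‖∑ k ∈ range n, (k : ℂ) * z ^ k‖ ^ 2 / n ^ 2 := by
  have : ‖z - 1‖ ≠ 0 := norm_ne_zero_iff.mpr (sub_ne_zero.mpr hz)
  rw [sum_range_natCast_mul_pow_of_pow_eq_one hzn hz, norm_div, norm_natCast]
  field_simp

theorem mul_sum_range_sq_sub_sq_sum_range (n : ℕ) :
    n * ∑ k ∈ range n, (k : ℝ) ^ 2 - (∑ k ∈ range n, (k : ℝ)) ^ 2 = n ^ 2 * (n ^ 2 - 1) / 12 := by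
  have hsum : ∀ m : ℕ, ∑ k ∈ range m, (k : ℝ) = m * (m - 1) / 2 := fun m ↦ by
    induction m with
    | zero => simp
    | succ m ih => rw [sum_range_succ, ih]; push_cast; ring
  have hsum_sq : ∀ m : ℕ, ∑ k ∈ range m, (k : ℝ) ^ 2 = m * (m - 1) * (2 * m - 1) / 6 := fun m ↦ by
    induction m with
    | zero => simp
    | succ m ih => rw [sum_range_succ, ih]; push_cast; ring
  rw [hsum, hsum_sq]
  ring

theorem sum_inv_abs_exp_sub_one_sq (b : ℕ) (hb : 2 ≤ b) :
    ∑ l ∈ Finset.Icc 1 (b - 1),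
        1 / ‖Complex.exp (2 * Real.pi * Complex.I * l / b) - 1‖ ^ 2
      = ((b : ℝ) ^ 2 - 1) / 12 := by
  have hb0 : b ≠ 0 := by omega
  have hζ := isPrimitiveRoot_exp b hb0
  set ζ := exp (2 * Real.pi * I / b)
  set S : ℕ → ℝ := fun l ↦ ‖∑ k ∈ range b, (k : ℂ) * (ζ ^ l) ^ k‖ ^ 2
  have hterm : ∀ l ∈ Icc 1 (b - 1), 1 / ‖exp (2 * Real.pi * I * l / b) - 1‖ ^ 2 = S l / b ^ 2 := by
    intro l hl
    obtain ⟨hl1, hlb⟩ := mem_Icc.mp hl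
    rw [show 2 * Real.pi * I * l / b = l * (2 * Real.pi * I / b) by ring, exp_nat_mul]
    exact inv_norm_sub_one_sq_eq_of_pow_eq_one hb0 (by rw [pow_right_comm, hζ.pow_eq_one, one_pow])
      (hζ.pow_ne_one_of_pos_of_lt (by omega) (by omega))
  have hsplit : ∑ l ∈ range b, S l = S 0 + ∑ l ∈ Icc 1 (b - 1), S l := by
    rw [sum_range_eq_add_Ico _ (by omega), Icc_sub_one_right_eq_Ico_of_not_isMin (by simpa)]
  have hS0 : S 0 = (∑ k ∈ range b, (k : ℝ)) ^ 2 := by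
    simp only [S, pow_zero, one_pow, mul_one]
    rw [← Nat.cast_sum, norm_natCast, Nat.cast_sum]
  have hparseval : ∑ l ∈ range b, S l = b * ∑ k ∈ range b, (k : ℝ) ^ 2 := by
    simpa using hζ.sum_norm_sq_sum_mul_pow (fun k ↦ k)
  rw [sum_congr rfl hterm, ← sum_div, eq_sub_of_add_eq' hsplit.symm, hparseval, hS0,
    mul_sum_range_sq_sub_sq_sum_range]
  field_simp
end

section
/- Let f(x) = x_1·...·x_d on [0,1)^d, let b ≥ 2, and let j ∈ ℕ_0^d, m ∈ D_j = ∏_i {0,...,b^{j_i}−1}, l ∈ B_j = ∏_i {1,...,b−1}. The b-adic Haar coefficient μ_{jml} = ∫_{[0,1)^d} f(x)·h_{jml}(x) dx equals b^{−2|j|−d} / ∏_{i=1}^d (e^{2πi·l_i/b} − 1), where |j| = j_1 + ... + j_d. -/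
open MeasureTheory Finset

/-!
Write `ω = e^{2πi l/b}`, a `b`-th root of unity different from `1`. On `I_{jm}` the Haar function
is `∑_{k<b} ω^k 𝟙_{I_{j+1,bm+k}}`, so its first moment is
`∑_k ω^k (2(bm+k)+1) / (2 b^{2j+2})`; since `∑_k ω^k = 0` and `(ω - 1) ∑_k k ω^k = b`, this is
`b^{-2j-1}/(ω - 1)`. The `d`-dimensional coefficient factors into these one-dimensional moments,
because `h_{jml}` vanishes off `[0,1)^d` when `m ∈ D_j`.
-/

/-- The `b`-adic Haar function on `[0,1)` of level `j`, position `m`, frequency `l`: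
supported on `[m/b^j, (m+1)/b^j)`, with constant value `e^(2πi·l·k/b)` on the
`k`-th child interval. -/
noncomputable def badicHaar (b j m l : ℕ) (x : ℝ) : ℂ :=
  if x ∈ Set.Ico ((m : ℝ) / (b : ℝ) ^ j) (((m : ℝ) + 1) / (b : ℝ) ^ j) then
    Complex.exp (2 * Real.pi * Complex.I * (l : ℂ) *
      (((⌊(b : ℝ) ^ (j + 1) * x⌋ - (b : ℤ) * m : ℤ) : ℂ)) / (b : ℂ))
  else 0

lemma sub_one_mul_sum_range_mul_pow {R : Type*} [CommRing R] (ω : R) (n : ℕ) :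
    (ω - 1) * ∑ k ∈ range n, (k : R) * ω ^ k
      = ((n : R) - 1) * ω ^ n - ∑ k ∈ range n, ω ^ k + 1 := by
  induction n with
  | zero => simp
  | succ n ih =>
    rw [sum_range_succ, sum_range_succ, mul_add, ih]
    push_cast
    ring

lemma sum_range_affine_mul_pow_of_pow_eq_one {K : Type*} [Field K] {ω : K} {n : ℕ}
    (hωn : ω ^ n = 1) (hω : ω ≠ 1) (a c : K) :
    ∑ k ∈ range n, (a + c * k) * ω ^ k = c * n / (ω - 1) := by
  have hω' : ω - 1 ≠ 0 := sub_ne_zero.mpr hω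
  have hgeom : ∑ k ∈ range n, ω ^ k = 0 := by rw [geom_sum_eq hω, hωn, sub_self, zero_div]
  have hlin : (ω - 1) * ∑ k ∈ range n, (k : K) * ω ^ k = n := by
    rw [sub_one_mul_sum_range_mul_pow, hωn, hgeom]
    ring
  simp_rw [add_mul, sum_add_distrib, ← mul_sum, mul_assoc, ← mul_sum, hgeom]
  rw [eq_div_iff hω', ← hlin]
  ring

lemma mem_Ico_div_iff_floor_mem_Ico {c : ℝ} (hc : 0 < c) (x : ℝ) (n n' : ℤ) :
    x ∈ Set.Ico (n / c) (n' / c) ↔ ⌊c * x⌋ ∈ Set.Ico n n' := by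
  simp only [Set.mem_Ico, div_le_iff₀ hc, lt_div_iff₀ hc, Int.le_floor, Int.floor_lt, mul_comm]

lemma setIntegral_Ico_ofReal {a c : ℝ} (h : a ≤ c) :
    ∫ x in Set.Ico a c, (x : ℂ) = (((c ^ 2 - a ^ 2) / 2 : ℝ) : ℂ) := by
  rw [integral_Ico_eq_integral_Ioc, ← intervalIntegral.integral_of_le h,
    intervalIntegral.integral_ofReal (f := fun x => x), integral_id]

/-- The interval `I_{jm}` carrying the Haar function `h_{jml}`. -/
def badicInterval (b j m : ℕ) : Set ℝ :=
  Set.Ico ((m : ℝ) / (b : ℝ) ^ j) (((m : ℝ) + 1) / (b : ℝ) ^ j)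

namespace badicInterval

variable {b j m : ℕ}

lemma mem_iff_floor (hb : 0 < b) (x : ℝ) :
    x ∈ badicInterval b j m ↔ ⌊(b : ℝ) ^ j * x⌋ = m := by
  have h := mem_Ico_div_iff_floor_mem_Ico (pow_pos (Nat.cast_pos.mpr hb) j) x m (m + 1)
  push_cast at h
  rw [badicInterval, h, Set.mem_Ico]
  omega

lemma mem_iff_floor_succ (hb : 0 < b) (x : ℝ) :
    x ∈ badicInterval b j m ↔ ⌊(b : ℝ) ^ (j + 1) * x⌋ ∈ Set.Ico (b * m : ℤ) (b * m + b) := by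
  have hB : (0 : ℝ) < (b : ℝ) ^ j := pow_pos (Nat.cast_pos.mpr hb) j
  rw [← mem_Ico_div_iff_floor_mem_Ico (by positivity), badicInterval]
  push_cast
  rw [pow_succ, mul_comm _ (b : ℝ), mul_div_mul_left _ _ (by positivity),
    ← mul_add_one, mul_div_mul_left _ _ (by positivity)]

lemma measurableSet : MeasurableSet (badicInterval b j m) :=
  measurableSet_Ico

lemma subset_Ico_zero_one (hm : m < b ^ j) : badicInterval b j m ⊆ Set.Ico 0 1 := by
  have hbj : (0 : ℝ) < (b : ℝ) ^ j := by exact_mod_cast (Nat.zero_le m).trans_lt hm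
  refine Set.Ico_subset_Ico (by positivity) ?_
  rw [div_le_one hbj]
  exact_mod_cast hm

end badicInterval

namespace Complex

lemma exp_two_pi_I_mul_div_eq_pow (b l : ℕ) :
    exp (2 * Real.pi * I * l / b) = exp (2 * Real.pi * I / b) ^ l := by
  rw [← exp_nat_mul]
  congr 1
  ring

lemma exp_two_pi_I_mul_div_pow_self (b l : ℕ) : exp (2 * Real.pi * I * l / b) ^ b = 1 := by
  rcases Nat.eq_zero_or_pos b with rfl | hb
  · exact pow_zero _
  · rw [exp_two_pi_I_mul_div_eq_pow, pow_right_comm,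
      (isPrimitiveRoot_exp b hb.ne').pow_eq_one, one_pow]

lemma exp_two_pi_I_mul_div_ne_one {b l : ℕ} (hl : 0 < l) (hlb : l < b) :
    exp (2 * Real.pi * I * l / b) ≠ 1 := by
  rw [exp_two_pi_I_mul_div_eq_pow]
  exact (isPrimitiveRoot_exp b (hl.trans hlb).ne').pow_ne_one_of_pos_of_lt hl.ne' hlb

end Complex

section Haar

variable {b j m l : ℕ}

lemma badicHaar_eq_sum_indicator (hb : 0 < b) (x : ℝ) :
    badicHaar b j m l x = ∑ k ∈ range b, (badicInterval b (j + 1) (b * m + k)).indicator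
      (fun _ => Complex.exp (2 * Real.pi * Complex.I * l / b) ^ k) x := by
  have hchild (k : ℕ) : x ∈ badicInterval b (j + 1) (b * m + k) ↔
      ⌊(b : ℝ) ^ (j + 1) * x⌋ = b * m + k := by
    rw [badicInterval.mem_iff_floor hb]
    push_cast
    rfl
  classical
  simp only [Set.indicator_apply, hchild]
  have hparent := badicInterval.mem_iff_floor_succ (j := j) (m := m) hb x
  rw [badicInterval] at hparent
  rw [badicHaar, if_congr hparent rfl rfl]
  generalize ⌊(b : ℝ) ^ (j + 1) * x⌋ = n
  by_cases hn : n ∈ Set.Ico (b * m : ℤ) (b * m + b)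
  · obtain ⟨k, rfl⟩ : ∃ k : ℕ, n = b * m + k := ⟨(n - b * m).toNat, by grind⟩
    have hk : k ∈ range b := by rw [Set.mem_Ico] at hn; rw [mem_range]; omega
    rw [if_pos hn, sum_eq_single_of_mem k hk fun k' _ hk' => if_neg (by simpa using hk'.symm),
      if_pos rfl, ← Complex.exp_nat_mul]
    congr 1
    push_cast
    ring
  · rw [if_neg hn]
    refine (sum_eq_zero fun k hk => if_neg ?_).symm
    rintro rfl
    rw [Set.mem_Ico] at hn
    rw [mem_range] at hk
    omega

lemma badicHaar_eq_zero_of_notMem {x : ℝ} (hx : x ∉ badicInterval b j m) :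
    badicHaar b j m l x = 0 :=
  if_neg hx

theorem integral_mul_badicHaar (hl : 0 < l) (hlb : l < b) :
    ∫ x : ℝ, (x : ℂ) * badicHaar b j m l x
      = ((b : ℂ) ^ (2 * j + 1))⁻¹ / (Complex.exp (2 * Real.pi * Complex.I * l / b) - 1) := by
  have hb : 0 < b := hl.trans hlb
  set ω := Complex.exp (2 * Real.pi * Complex.I * l / b)
  have hint (k : ℕ) : Integrable
      ((badicInterval b (j + 1) (b * m + k)).indicator fun x : ℝ => (x : ℂ) * ω ^ k) :=
    (integrable_indicator_iff badicInterval.measurableSet).2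
      ((Complex.continuous_ofReal.mul continuous_const).integrableOn_Icc.mono_set
        Set.Ico_subset_Icc_self)
  have hpiece (k : ℕ) : (∫ x in badicInterval b (j + 1) (b * m + k), (x : ℂ)) * ω ^ k
      = ((2 * b * m + 1) / (2 * (b : ℂ) ^ (2 * j + 2)) + 1 / (b : ℂ) ^ (2 * j + 2) * k)
        * ω ^ k := by
    rw [badicInterval, setIntegral_Ico_ofReal (by gcongr; linarith)]
    push_cast
    field_simp
    ring
  simp_rw [badicHaar_eq_sum_indicator hb, mul_sum, ← Set.indicator_mul_right]
  rw [integral_finsetSum _ fun k _ => hint k]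
  simp_rw [integral_indicator badicInterval.measurableSet, integral_mul_const]
  have hωb : ω ^ b = 1 := Complex.exp_two_pi_I_mul_div_pow_self b l
  have hω : ω ≠ 1 := Complex.exp_two_pi_I_mul_div_ne_one hl hlb
  rw [sum_congr rfl fun k _ => hpiece k, sum_range_affine_mul_pow_of_pow_eq_one hωb hω]
  have hω' : ω - 1 ≠ 0 := sub_ne_zero.mpr hω
  have hb' : (b : ℂ) ≠ 0 := Nat.cast_ne_zero.mpr hb.ne'
  field_simp
  ring

end Haar

theorem haar_coeff_of_product_general (d b : ℕ)
    (j m l : Fin d → ℕ) (hm : ∀ i, m i < b ^ j i) (hl : ∀ i, 1 ≤ l i ∧ l i < b) :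
    ∫ x in Set.univ.pi (fun _ : Fin d => Set.Ico (0 : ℝ) 1),
        ((∏ i, x i : ℝ) : ℂ) * ∏ i, badicHaar b (j i) (m i) (l i) (x i)
      = (b : ℂ) ^ (-(2 * ∑ i, (j i : ℤ)) - (d : ℤ)) /
          ∏ i, (Complex.exp (2 * Real.pi * Complex.I * (l i) / b) - 1) := by
  have hsupp (x : Fin d → ℝ) (hx : x ∉ Set.univ.pi fun _ => Set.Ico (0 : ℝ) 1) :
      ∏ i, (x i : ℂ) * badicHaar b (j i) (m i) (l i) (x i) = 0 := by
    simp only [Set.mem_univ_pi, not_forall] at hx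
    obtain ⟨i, hxi⟩ := hx
    refine prod_eq_zero (mem_univ i) ?_
    rw [badicHaar_eq_zero_of_notMem fun h => hxi (badicInterval.subset_Ico_zero_one (hm i) h),
      mul_zero]
  have hexp : -(2 * ∑ i, (j i : ℤ)) - d = -((∑ i, (2 * j i + 1) : ℕ) : ℤ) := by
    push_cast
    rw [sum_add_distrib, ← mul_sum, sum_const, card_univ, Fintype.card_fin, nsmul_one]
    ring
  calc _ = ∫ x in Set.univ.pi fun _ => Set.Ico (0 : ℝ) 1,
        ∏ i, (x i : ℂ) * badicHaar b (j i) (m i) (l i) (x i) := by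
        simp_rw [Complex.ofReal_prod, prod_mul_distrib]
    _ = ∏ i, ∫ y : ℝ, (y : ℂ) * badicHaar b (j i) (m i) (l i) y := by
        rw [setIntegral_eq_integral_of_forall_compl_eq_zero hsupp]
        exact integral_fintype_prod_volume_eq_prod
          fun i (y : ℝ) => (y : ℂ) * badicHaar b (j i) (m i) (l i) y
    _ = _ := by
        simp_rw [integral_mul_badicHaar (hl _).1 (hl _).2]
        rw [prod_div_distrib, prod_inv_distrib, prod_pow_eq_pow_sum, hexp, zpow_neg, zpow_natCast]

theorem haar_coeff_of_product (d b : ℕ) (hd : 0 < d) (hb : 2 ≤ b)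
    (j m l : Fin d → ℕ) (hm : ∀ i, m i < b ^ j i) (hl : ∀ i, 1 ≤ l i ∧ l i < b) :
    ∫ x in Set.univ.pi (fun _ : Fin d => Set.Ico (0 : ℝ) 1),
        ((∏ i, x i : ℝ) : ℂ) * ∏ i, badicHaar b (j i) (m i) (l i) (x i)
      = (b : ℂ) ^ (-(2 * ∑ i, (j i : ℤ)) - (d : ℤ)) /
          ∏ i, (Complex.exp (2 * Real.pi * Complex.I * (l i) / b) - 1) :=
  haar_coeff_of_product_general d b j m l hm hl
end
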